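/- Let λ > 0 and let f ∈ L²(ℝ) be even with ℱf = f. Let u be the unique even function in L²(ℝ) vanishing a.e. outside (−λ,λ) with u + F_λ u = P_λ f. Then the orthogonal projection of f onto the Sonine space K_λ equals f − u − ℱu. -/

import Mathlib

/-!
Put `v = f - u - ℱu`. The function `u` is even and supported in `(-λ, λ)`, hence integrable, and
for an even integrable function the Fourier integral and its inverse coincide; testing against
Schwartz functions turns this into `ℱ⁻¹u = ℱu`, i.e. `ℱ(ℱu) = u`. With `ℱf = f` this gives
`ℱv = v`, and on `(-λ, λ)` the equation `u + F_λ u = P_λ f` reads `u + ℱu = f`, so `v` and `ℱv`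
vanish there. Finally `f - v = u + ℱu` is orthogonal to `K_λ`: `u` lives on `(-λ, λ)`, where
every `g ∈ K_λ` vanishes, and `⟪ℱu, g⟫ = ⟪u, ℱg⟫` with `ℱg` vanishing there as well.
-/

open MeasureTheory Complex Set FourierTransform

noncomputable section

/-- `F` is the Fourier–Plancherel transform on `L²(ℝ)`: the unitary operator agreeing with
the Fourier integral `x ↦ ∫ y, exp(2πixy) f y` on integrable square-integrable functions. -/
def IsFourierPlancherel
    (F : Lp ℂ 2 (volume : Measure ℝ) ≃ₗᵢ[ℂ] Lp ℂ 2 (volume : Measure ℝ)) : Prop :=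
  ∀ (f : ℝ → ℂ) (_ : Integrable f volume) (hf : MemLp f 2 volume),
    (F (hf.toLp f) : ℝ → ℂ) =ᵐ[volume] (𝓕⁻ f : ℝ → ℂ)

/-- `P_λ` : multiplication by the indicator function of `(-λ, λ)` on `L²(ℝ)`. -/
def Pproj (lam : ℝ) (f : Lp ℂ 2 (volume : Measure ℝ)) : Lp ℂ 2 (volume : Measure ℝ) :=
  ((Lp.memLp f).indicator (measurableSet_Ioo : MeasurableSet (Ioo (-lam) lam))).toLp _


/-- The Sonine space `K_λ`: even `f ∈ L²(ℝ)` with `f = 0` a.e. on `(−λ,λ)` and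
`ℱf = 0` a.e. on `(−λ,λ)`. -/
def Kset (lam : ℝ)
    (F : Lp ℂ 2 (volume : Measure ℝ) ≃ₗᵢ[ℂ] Lp ℂ 2 (volume : Measure ℝ)) :
    Set (Lp ℂ 2 (volume : Measure ℝ)) :=
  {g | (∀ᵐ x : ℝ, g (-x) = g x) ∧
       (∀ᵐ x : ℝ, x ∈ Ioo (-lam) lam → g x = 0) ∧
       (∀ᵐ x : ℝ, x ∈ Ioo (-lam) lam → (F g) x = 0)}

/-- The operator `F_λ = P_λ ℱ P_λ`. -/
def Fop (lam : ℝ)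
    (F : Lp ℂ 2 (volume : Measure ℝ) ≃ₗᵢ[ℂ] Lp ℂ 2 (volume : Measure ℝ))
    (f : Lp ℂ 2 (volume : Measure ℝ)) : Lp ℂ 2 (volume : Measure ℝ) :=
  Pproj lam (F (Pproj lam f))


namespace Real

variable {V : Type*} [NormedAddCommGroup V] [InnerProductSpace ℝ V] [FiniteDimensional ℝ V]
  [MeasurableSpace V] [BorelSpace V]

theorem integral_inner_fourierInv_eq {H : Type*} [NormedAddCommGroup H] [InnerProductSpace ℂ H]
    [CompleteSpace H] {f g : V → H} (hf : Integrable f) (hg : Integrable g) :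
    ∫ ξ, inner ℂ (𝓕⁻ f ξ) (g ξ) = ∫ x, inner ℂ (f x) (𝓕 g x) := by
  have hflip : -(-innerₗ V).flip = innerₗ V := by
    ext x y
    simp [real_inner_comm]
  have := VectorFourier.integral_sesq_fourierIntegral_eq_neg_flip (innerSL ℂ) (L := -innerₗ V)
      continuous_fourierChar continuous_inner.neg hf hg
  rwa [hflip] at this

variable {E : Type*} [NormedAddCommGroup E] [NormedSpace ℂ E]

theorem fourierInv_eq_fourier_of_ae_even {f : V → E} (hf : ∀ᵐ x, f (-x) = f x) :
    𝓕⁻ f = 𝓕 f := by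
  rw [fourierInv_eq_fourier_comp_neg]
  ext w
  exact fourier_congr_ae hf w

theorem fourierInv_neg_of_ae_even {f : V → E} (hf : ∀ᵐ x, f (-x) = f x) (w : V) :
    𝓕⁻ f (-w) = 𝓕⁻ f w := by
  rw [fourierInv_eq_fourier_neg, neg_neg, fourierInv_eq_fourier_of_ae_even hf]

end Real

namespace MeasureTheory

variable {α E : Type*} [MeasurableSpace α] {μ : Measure α}

theorem MemLp.integrable_of_ae_notMem_eq_zero [NormedAddCommGroup E] {f : α → E}
    {p : ENNReal} (hf : MemLp f p μ) (hp : 1 ≤ p) {s : Set α} (hs : μ s ≠ ⊤)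
    (h : ∀ᵐ x ∂μ, x ∉ s → f x = 0) : Integrable f μ := by
  have : Fact (μ s < ⊤) := ⟨hs.lt_top⟩
  exact IntegrableOn.integrable_of_ae_notMem_eq_zero ((hf.restrict s).integrable hp) h

theorem L2.inner_eq_zero_of_ae_eq_zero {𝕜 : Type*} [RCLike 𝕜] [NormedAddCommGroup E]
    [InnerProductSpace 𝕜 E] {s : Set α} {a b : Lp E 2 μ}
    (ha : ∀ᵐ x ∂μ, x ∉ s → a x = 0) (hb : ∀ᵐ x ∂μ, x ∈ s → b x = 0) :
    inner 𝕜 a b = 0 := by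
  rw [L2.inner_def, ← integral_zero α 𝕜]
  refine integral_congr_ae ?_
  filter_upwards [ha, hb] with x ha hb
  by_cases hx : x ∈ s <;> simp [hx, ha, hb]

variable [AddGroup α] [MeasurableNeg α] [μ.IsNegInvariant]

theorem ae_comp_neg {p : α → Prop} (h : ∀ᵐ x ∂μ, p x) : ∀ᵐ x ∂μ, p (-x) :=
  (Measure.measurePreserving_neg μ).quasiMeasurePreserving.ae h

theorem ae_even_of_ae_eq {β : Type*} {f g : α → β} (hfg : f =ᵐ[μ] g) (hg : ∀ x, g (-x) = g x) :
    ∀ᵐ x ∂μ, f (-x) = f x := by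
  filter_upwards [hfg, ae_comp_neg hfg] with x h h'
  rw [h', hg, h]

theorem Lp.ae_even_sub [NormedAddCommGroup E] {p : ENNReal} {a b : Lp E p μ}
    (ha : ∀ᵐ x ∂μ, a (-x) = a x) (hb : ∀ᵐ x ∂μ, b (-x) = b x) :
    ∀ᵐ x ∂μ, (a - b) (-x) = (a - b) x := by
  have h := Lp.coeFn_sub a b
  filter_upwards [h, ae_comp_neg h, ha, hb] with x h h' ha hb
  simp only [h, h', Pi.sub_apply, ha, hb]

end MeasureTheory

theorem coeFn_Pproj (lam : ℝ) (f : Lp ℂ 2 (volume : Measure ℝ)) :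
    Pproj lam f =ᵐ[volume] (Ioo (-lam) lam).indicator f :=
  MemLp.coeFn_toLp _

theorem Pproj_eq_self {lam : ℝ} {f : Lp ℂ 2 (volume : Measure ℝ)}
    (hf : ∀ᵐ x, x ∉ Ioo (-lam) lam → f x = 0) : Pproj lam f = f := by
  refine Lp.ext ?_
  filter_upwards [coeFn_Pproj lam f, hf] with x h hx
  by_cases hxI : x ∈ Ioo (-lam) lam
  · rw [h, indicator_of_mem hxI]
  · rw [h, indicator_of_notMem hxI, hx hxI]

theorem ae_add_eq_of_add_Pproj_eq {lam : ℝ} {u g f : Lp ℂ 2 (volume : Measure ℝ)}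
    (h : u + Pproj lam g = Pproj lam f) :
    ∀ᵐ x, x ∈ Ioo (-lam) lam → u x + g x = f x := by
  have h' : ((u + Pproj lam g : Lp ℂ 2 (volume : Measure ℝ)) : ℝ → ℂ) = Pproj lam f := by rw [h]
  filter_upwards [Lp.coeFn_add u (Pproj lam g), coeFn_Pproj lam g, coeFn_Pproj lam f]
    with x h1 h2 h3 hx
  have hx' := congrFun h' x
  rwa [h1, Pi.add_apply, h2, h3, indicator_of_mem hx, indicator_of_mem hx] at hx'

namespace IsFourierPlancherel

variable {F : Lp ℂ 2 (volume : Measure ℝ) ≃ₗᵢ[ℂ] Lp ℂ 2 (volume : Measure ℝ)}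
  {u : Lp ℂ 2 (volume : Measure ℝ)}

theorem coeFn_apply (hF : IsFourierPlancherel F) (hu : Integrable u) :
    F u =ᵐ[volume] 𝓕⁻ (u : ℝ → ℂ) := by
  simpa using hF u hu (Lp.memLp u)

theorem symm_apply_eq (hF : IsFourierPlancherel F) {w : Lp ℂ 2 (volume : Measure ℝ)}
    (hu : Integrable u) (hw : w =ᵐ[volume] 𝓕 (u : ℝ → ℂ)) : F.symm u = w := by
  refine (SchwartzMap.denseRange_toLpCLM (F := ℂ) (p := 2) (μ := volume)
    ENNReal.ofNat_ne_top).eq_of_inner_right ℂ fun φ => ?_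
  have hφ : F (φ.toLp 2) =ᵐ[volume] 𝓕⁻ (φ : ℝ → ℂ) := hF φ φ.integrable (φ.memLp 2)
  calc inner ℂ (φ.toLp 2) (F.symm u)
      = inner ℂ (F (φ.toLp 2)) u := by rw [← F.inner_map_map, F.apply_symm_apply]
    _ = ∫ ξ, inner ℂ (𝓕⁻ (φ : ℝ → ℂ) ξ) (u ξ) := by
        rw [L2.inner_def]
        refine integral_congr_ae ?_
        filter_upwards [hφ] with ξ h
        rw [h]
    _ = ∫ x, inner ℂ (φ x) (𝓕 (u : ℝ → ℂ) x) := Real.integral_inner_fourierInv_eq φ.integrable hu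
    _ = inner ℂ (φ.toLp 2) w := by
        rw [L2.inner_def]
        refine integral_congr_ae ?_
        filter_upwards [φ.coeFn_toLp 2, hw] with x h1 h2
        rw [h1, h2]

theorem symm_apply_eq_apply_of_ae_even (hF : IsFourierPlancherel F) (hu : Integrable u)
    (he : ∀ᵐ x, u (-x) = u x) : F.symm u = F u :=
  hF.symm_apply_eq hu (by rw [← Real.fourierInv_eq_fourier_of_ae_even he]; exact hF.coeFn_apply hu)

theorem apply_apply_of_ae_even (hF : IsFourierPlancherel F) (hu : Integrable u)
    (he : ∀ᵐ x, u (-x) = u x) : F (F u) = u := by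
  rw [← hF.symm_apply_eq_apply_of_ae_even hu he, F.apply_symm_apply]

theorem ae_even_apply (hF : IsFourierPlancherel F) (hu : Integrable u) (he : ∀ᵐ x, u (-x) = u x) :
    ∀ᵐ x, F u (-x) = F u x :=
  ae_even_of_ae_eq (hF.coeFn_apply hu) (Real.fourierInv_neg_of_ae_even he)

end IsFourierPlancherel

theorem projection_onto_sonine_of_selfdual_general (lam : ℝ)
    (F : Lp ℂ 2 (volume : Measure ℝ) ≃ₗᵢ[ℂ] Lp ℂ 2 (volume : Measure ℝ))
    (hF : IsFourierPlancherel F)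
    (f u : Lp ℂ 2 (volume : Measure ℝ))
    (heven : ∀ᵐ x : ℝ, f (-x) = f x)
    (hself : F f = f)
    (hue : ∀ᵐ x : ℝ, u (-x) = u x) (hus : ∀ᵐ x : ℝ, x ∉ Ioo (-lam) lam → u x = 0)
    (hu : u + Fop lam F u = Pproj lam f) :
    (f - u - F u) ∈ Kset lam F ∧
    ∀ g ∈ Kset lam F, inner (𝕜 := ℂ) (f - (f - u - F u)) g = (0 : ℂ) := by
  have hui : Integrable u :=
    (Lp.memLp u).integrable_of_ae_notMem_eq_zero one_le_two (by simp [Real.volume_Ioo]) hus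
  have hFFu : F (F u) = u := hF.apply_apply_of_ae_even hui hue
  have hsum : ∀ᵐ x, x ∈ Ioo (-lam) lam → u x + F u x = f x := by
    rw [Fop, Pproj_eq_self hus] at hu
    exact ae_add_eq_of_add_Pproj_eq hu
  have hv_zero : ∀ᵐ x, x ∈ Ioo (-lam) lam → (f - u - F u) x = 0 := by
    filter_upwards [hsum, Lp.coeFn_sub (f - u) (F u), Lp.coeFn_sub f u] with x hx h1 h2 hxI
    rw [h1, Pi.sub_apply, h2, Pi.sub_apply, ← hx hxI]
    ring
  have hFv : F (f - u - F u) = f - u - F u := by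
    rw [map_sub, map_sub, hself, hFFu]
    abel
  refine ⟨⟨Lp.ae_even_sub (Lp.ae_even_sub heven hue) (hF.ae_even_apply hui hue), hv_zero,
    by rwa [hFv]⟩, ?_⟩
  rintro g ⟨-, hg_zero, hFg_zero⟩
  have hFu_g : inner ℂ (F u) g = inner ℂ u (F g) := by rw [← F.inner_map_map, hFFu]
  rw [show f - (f - u - F u) = u + F u by abel, inner_add_left, hFu_g,
    L2.inner_eq_zero_of_ae_eq_zero hus hg_zero, L2.inner_eq_zero_of_ae_eq_zero hus hFg_zero,
    add_zero]

/-- If `f ∈ L²(ℝ)` is even with `ℱf = f`, and `u + F_λ u = P_λ f`, then the orthogonal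
projection of `f` onto the Sonine space `K_λ` equals `f − u − ℱu`. -/
theorem projection_onto_sonine_of_selfdual (lam : ℝ) (hlam : 0 < lam)
    (F : Lp ℂ 2 (volume : Measure ℝ) ≃ₗᵢ[ℂ] Lp ℂ 2 (volume : Measure ℝ))
    (hF : IsFourierPlancherel F)
    (f u : Lp ℂ 2 (volume : Measure ℝ))
    (heven : ∀ᵐ x : ℝ, f (-x) = f x)
    (hself : F f = f)
    (hue : ∀ᵐ x : ℝ, u (-x) = u x) (hus : ∀ᵐ x : ℝ, x ∉ Ioo (-lam) lam → u x = 0)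
    (hu : u + Fop lam F u = Pproj lam f) :
    (f - u - F u) ∈ Kset lam F ∧
    ∀ g ∈ Kset lam F, inner (𝕜 := ℂ) (f - (f - u - F u)) g = (0 : ℂ) :=
  projection_onto_sonine_of_selfdual_general lam F hF f u heven hself hue hus hu
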